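/- For every m ∈ ℕ there exists a histogram polygon P such that, under r-visibility with vertex guards and geodesic L1-distances, every vertex guard set of P attaining the maximum possible dispersion distance has cardinality at least m times the minimum cardinality of a vertex guard set of P; hence the ratio between the size of a smallest maximally dispersed vertex guard set and the size of a smallest vertex guard set can be arbitrarily large, even for histograms. -/

import Mathlib

/-!
The histogram is a spike of height `2` over `[0, 1]`, a notch of height `1` over `[1, 2]`, and
a staircase of `M` unit steps descending from height `M + 1` to `2`. The origin and the notch
corner `(2, 1)` form a smallest guard set: the notch corner sees the notch and, the staircase
being descending, every step; and no point sees both the top of the spike and the top of the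
first step.

The origin together with every other step corner is a guard set whose guards are pairwise at
`L¹`-distance at least `4`, so a maximally dispersed guard set has dispersion at least `4`. It
therefore avoids the notch corner, which is within geodesic distance `3` of every guard of the
spike. The top of step `j` is then seen only by vertices on the lines `x = j + 2` and
`x = j + 3`, so each guard serves at most two steps and at least `M / 2` guards are needed.
-/

open Set
open scoped ENNReal

noncomputable section

/-- The plane, equipped with the `L¹` metric. -/
abbrev Plane : Type := WithLp 1 (ℝ × ℝ)

namespace DispersiveAGP

noncomputable instance : DecidableEq Plane := Classical.decEq _

/-- The `x`-coordinate of a point of the plane. -/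
def px (p : Plane) : ℝ := (WithLp.equiv 1 (ℝ × ℝ) p).1

/-- The `y`-coordinate of a point of the plane. -/
def py (p : Plane) : ℝ := (WithLp.equiv 1 (ℝ × ℝ) p).2

/-- The point of the plane with the given coordinates. -/
def pt (a b : ℝ) : Plane := (WithLp.equiv 1 (ℝ × ℝ)).symm (a, b)

/-- Data of an axis-parallel rectangle. -/
structure Rect where
  x1 : ℝ
  x2 : ℝ
  y1 : ℝ
  y2 : ℝ

noncomputable instance : DecidableEq Rect := Classical.decEq _

/-- The closed rectangle, as a set of points of the plane. -/
def Rect.toSet (R : Rect) : Set Plane :=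
  {p | R.x1 ≤ px p ∧ px p ≤ R.x2 ∧ R.y1 ≤ py p ∧ py p ≤ R.y2}

/-- The open rectangle. -/
def Rect.interiorSet (R : Rect) : Set Plane :=
  {p | R.x1 < px p ∧ px p < R.x2 ∧ R.y1 < py p ∧ py p < R.y2}

/-- The rectangle is nondegenerate. -/
def Rect.Nondegenerate (R : Rect) : Prop := R.x1 < R.x2 ∧ R.y1 < R.y2

/-- `p` and `q` r-see each other within the region `S`: the closed axis-parallel
rectangle with opposite corners `p` and `q` is contained in `S`. -/
def RSee (S : Set Plane) (p q : Plane) : Prop :=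
  {r : Plane | min (px p) (px q) ≤ px r ∧ px r ≤ max (px p) (px q) ∧
      min (py p) (py q) ≤ py r ∧ py r ≤ max (py p) (py q)} ⊆ S

/-- A vertex of (the boundary of) the region `S`: a boundary point such that in no
neighborhood of it is the boundary contained in a single line. -/
def IsVertex (S : Set Plane) (v : Plane) : Prop :=
  v ∈ frontier S ∧
    ∀ ε > (0 : ℝ), ¬ ∃ a b c : ℝ, (a ≠ 0 ∨ b ≠ 0) ∧
      ∀ q ∈ frontier S ∩ Metric.ball v ε, a * px q + b * py q = c

/-- A vertex guard set of the region `S`, under r-visibility. -/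
def IsGuardSet (S : Set Plane) (G : Finset Plane) : Prop :=
  (∀ g ∈ G, IsVertex S g) ∧ ∀ p ∈ S, ∃ g ∈ G, RSee S g p

/-- Geodesic `L¹`-distance within `S`: the infimum of `L¹`-lengths (total variations
with respect to the `L¹` metric) of paths from `p` to `q` that stay inside `S`. -/
def geodesic (S : Set Plane) (p q : Plane) : ℝ≥0∞ :=
  ⨅ (γ : Path p q) (_ : Set.range (fun t => γ t) ⊆ S),
    eVariationOn (fun t => γ t) Set.univ

/-- The dispersion distance of a guard set `G` within region `S`: the minimum geodesic
`L¹`-distance between two distinct guards. -/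
def dispersion (S : Set Plane) (G : Finset Plane) : ℝ≥0∞ :=
  ⨅ (g ∈ G) (g' ∈ G) (_ : g ≠ g'), geodesic S g g'

/-- The guard set `G` has dispersion distance at least `ℓ`. -/
def DispersionAtLeast (S : Set Plane) (G : Finset Plane) (ℓ : ℝ≥0∞) : Prop :=
  ∀ g ∈ G, ∀ g' ∈ G, g ≠ g' → ℓ ≤ geodesic S g g'

/-- `G` is a vertex guard set attaining the maximum possible dispersion distance. -/
def AttainsMaxDispersion (S : Set Plane) (G : Finset Plane) : Prop :=
  IsGuardSet S G ∧ ∀ G' : Finset Plane, IsGuardSet S G' → dispersion S G' ≤ dispersion S G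

/-- The horizontal corridor `C` connects the room `R1` (on its left) with the room `R2`
(on its right): the two vertical sides of `C` are strictly contained in the relative
interiors of the corresponding vertical edges of `R1` resp. `R2`. -/
def ConnectsH (C R1 R2 : Rect) : Prop :=
  R1.x2 = C.x1 ∧ C.x2 = R2.x1 ∧
  R1.y1 < C.y1 ∧ C.y2 < R1.y2 ∧ R2.y1 < C.y1 ∧ C.y2 < R2.y2

/-- The vertical corridor `C` connects the room `R1` (below) with the room `R2` (above). -/
def ConnectsV (C R1 R2 : Rect) : Prop :=
  R1.y2 = C.y1 ∧ C.y2 = R2.y1 ∧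
  R1.x1 < C.x1 ∧ C.x2 < R1.x2 ∧ R2.x1 < C.x1 ∧ C.x2 < R2.x2

/-- The corridor `C` connects the rooms `R1` and `R2`. -/
def Connects (C R1 R2 : Rect) : Prop := ConnectsH C R1 R2 ∨ ConnectsV C R1 R2

/-- An office-like polygon: a connected union of rectangular rooms linked by
rectangular corridors, each corridor connecting exactly two rooms and being strictly
narrower than both of them. -/
structure OfficePolygon where
  rooms : Finset Rect
  corridors : Finset Rect
  rooms_nonempty : rooms.Nonempty
  nondeg_rooms : ∀ R ∈ rooms, R.Nondegenerate
  nondeg_corridors : ∀ C ∈ corridors, C.Nondegenerate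
  connects : ∀ C ∈ corridors, ∃ R1 ∈ rooms, ∃ R2 ∈ rooms, R1 ≠ R2 ∧ Connects C R1 R2
  corridor_room_disjoint : ∀ C ∈ corridors, ∀ R ∈ rooms, C.interiorSet ∩ R.toSet = ∅
  rooms_disjoint : ∀ R1 ∈ rooms, ∀ R2 ∈ rooms, R1 ≠ R2 → R1.interiorSet ∩ R2.interiorSet = ∅
  corridors_disjoint : ∀ C1 ∈ corridors, ∀ C2 ∈ corridors, C1 ≠ C2 →
    C1.interiorSet ∩ C2.interiorSet = ∅
  connected : IsConnected ((⋃ R ∈ rooms, R.toSet) ∪ (⋃ C ∈ corridors, C.toSet))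

/-- The polygonal region covered by an office-like polygon. -/
def OfficePolygon.region (P : OfficePolygon) : Set Plane :=
  (⋃ R ∈ P.rooms, R.toSet) ∪ (⋃ C ∈ P.corridors, C.toSet)

/-- All vertices of the region lie on integer coordinates. -/
def HasIntegerVertices (S : Set Plane) : Prop :=
  ∀ v, IsVertex S v → ∃ a b : ℤ, v = pt a b

/-- Any two distinct vertices are at geodesic `L¹`-distance at least `1`. -/
def VertexSeparated (S : Set Plane) : Prop :=
  ∀ v w, IsVertex S v → IsVertex S w → v ≠ w → 1 ≤ geodesic S v w

/-- The corridors `C1` and `C2` are independent within `S`: no guard placed at a vertex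
of one of them r-sees all of the other. -/
def IndependentCorridors (S : Set Plane) (C1 C2 : Rect) : Prop :=
  (∀ v, IsVertex S v → v ∈ C1.toSet → ∃ q ∈ C2.toSet, ¬ RSee S v q) ∧
  (∀ v, IsVertex S v → v ∈ C2.toSet → ∃ q ∈ C1.toSet, ¬ RSee S v q)

/-- An office-like polygon is independent if all pairs of distinct corridors are
independent. -/
def OfficePolygon.Independent (P : OfficePolygon) : Prop :=
  ∀ C1 ∈ P.corridors, ∀ C2 ∈ P.corridors, C1 ≠ C2 → IndependentCorridors P.region C1 C2


/-- A histogram polygon: an x-monotone simple orthogonal polygon whose boundary contains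
a single horizontal base edge (here on the x-axis) spanning its full horizontal extent.
It is determined by column abscissas `xs 0 < xs 1 < ⋯ < xs n` and positive column
heights `h 0, …, h (n-1)` with distinct adjacent heights. -/
structure Histogram where
  n : ℕ
  npos : 0 < n
  xs : Fin (n + 1) → ℝ
  mono : StrictMono xs
  h : Fin n → ℝ
  hpos : ∀ i, 0 < h i
  adj_ne : ∀ i j : Fin n, (i : ℕ) + 1 = (j : ℕ) → h i ≠ h j

/-- The region covered by a histogram polygon. -/
def Histogram.region (H : Histogram) : Set Plane :=
  ⋃ i : Fin H.n,
    {p | H.xs i.castSucc ≤ px p ∧ px p ≤ H.xs i.succ ∧ 0 ≤ py p ∧ py p ≤ H.h i}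

open Filter Topology

@[simp] lemma px_pt (a b : ℝ) : px (pt a b) = a := rfl

@[simp] lemma py_pt (a b : ℝ) : py (pt a b) = b := rfl

@[simp] lemma pt_px_py (p : Plane) : pt (px p) (py p) = p := rfl

lemma Plane.ext {p q : Plane} (hx : px p = px q) (hy : py p = py q) : p = q := by
  rw [← pt_px_py p, ← pt_px_py q, hx, hy]

lemma px_add (p q : Plane) : px (p + q) = px p + px q := rfl

lemma py_add (p q : Plane) : py (p + q) = py p + py q := rfl

lemma px_smul (c : ℝ) (p : Plane) : px (c • p) = c * px p := rfl

lemma py_smul (c : ℝ) (p : Plane) : py (c • p) = c * py p := rfl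

lemma dist_eq_abs_add_abs (p q : Plane) : dist p q = |px p - px q| + |py p - py q| := by
  rw [WithLp.prod_dist_eq_add (by norm_num : (0:ℝ) < (1 : ℝ≥0∞).toReal)]
  simp [Real.dist_eq, px, py]

lemma edist_eq_ofReal (p q : Plane) :
    edist p q = ENNReal.ofReal (|px p - px q| + |py p - py q|) := by
  rw [edist_dist, dist_eq_abs_add_abs]

lemma continuous_px : Continuous px :=
  continuous_fst.comp (WithLp.prod_continuous_ofLp _ _ _)

lemma continuous_py : Continuous py :=
  continuous_snd.comp (WithLp.prod_continuous_ofLp _ _ _)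

lemma continuous_pt {α : Type*} [TopologicalSpace α] {f g : α → ℝ}
    (hf : Continuous f) (hg : Continuous g) : Continuous fun t => pt (f t) (g t) :=
  (WithLp.prod_continuous_toLp _ _ _).comp (hf.prodMk hg)

lemma Rect.toSet_eq (R : Rect) :
    R.toSet = (px ⁻¹' Icc R.x1 R.x2) ∩ (py ⁻¹' Icc R.y1 R.y2) := by
  ext p; simp [Rect.toSet, and_assoc]

lemma Rect.interiorSet_eq (R : Rect) :
    R.interiorSet = (px ⁻¹' Ioo R.x1 R.x2) ∩ (py ⁻¹' Ioo R.y1 R.y2) := by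
  ext p; simp [Rect.interiorSet, and_assoc]

lemma Rect.convex_toSet (R : Rect) : Convex ℝ R.toSet := by
  rw [R.toSet_eq]
  exact ((convex_Icc _ _).is_linear_preimage ⟨px_add, px_smul⟩).inter
    ((convex_Icc _ _).is_linear_preimage ⟨py_add, py_smul⟩)

lemma Rect.isClosed_toSet (R : Rect) : IsClosed R.toSet := by
  rw [R.toSet_eq]
  exact (isClosed_Icc.preimage continuous_px).inter (isClosed_Icc.preimage continuous_py)

lemma Rect.isOpen_interiorSet (R : Rect) : IsOpen R.interiorSet := by
  rw [R.interiorSet_eq]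
  exact (isOpen_Ioo.preimage continuous_px).inter (isOpen_Ioo.preimage continuous_py)

lemma Rect.interiorSet_subset_toSet (R : Rect) : R.interiorSet ⊆ R.toSet :=
  fun _ hp => ⟨hp.1.le, hp.2.1.le, hp.2.2.1.le, hp.2.2.2.le⟩

lemma rSee_of_mem_rect {S : Set Plane} {R : Rect} (hR : R.toSet ⊆ S) {g p : Plane}
    (hg : g ∈ R.toSet) (hp : p ∈ R.toSet) : RSee S g p :=
  fun _ ⟨h1, h2, h3, h4⟩ => hR ⟨(le_min hg.1 hp.1).trans h1, h2.trans (max_le hg.2.1 hp.2.1),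
    (le_min hg.2.2.1 hp.2.2.1).trans h3, h4.trans (max_le hg.2.2.2 hp.2.2.2)⟩

lemma RSee.mem_left {S : Set Plane} {g p : Plane} (h : RSee S g p) : g ∈ S :=
  h ⟨min_le_left _ _, le_max_left _ _, min_le_left _ _, le_max_left _ _⟩

section Geodesic

variable {S : Set Plane} {p q r : Plane}

lemma edist_le_geodesic : edist p q ≤ geodesic S p q := by
  refine le_iInf₂ fun γ _ => ?_
  simpa using eVariationOn.edist_le (fun t => γ t) (mem_univ 0) (mem_univ 1)

lemma geodesic_le_eVariationOn {f : ℝ → Plane} {a b : ℝ} (hab : a ≤ b)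
    (hf : ContinuousOn f (Icc a b)) (ha : f a = p) (hb : f b = q) (hS : MapsTo f (Icc a b) S) :
    geodesic S p q ≤ eVariationOn f (Icc a b) := by
  set φ : unitInterval → ℝ := fun t => a + t * (b - a)
  have hφ : MapsTo φ univ (Icc a b) := fun t _ => by
    constructor <;> nlinarith [t.2.1, t.2.2]
  let γ : Path p q :=
    { toFun := f ∘ φ
      continuous_toFun := hf.comp_continuous (by fun_prop) fun t => hφ (mem_univ t)
      source' := by simpa [φ] using ha
      target' := by simpa [φ] using hb }
  refine iInf₂_le_of_le γ (range_subset_iff.2 fun t => hS (hφ (mem_univ t))) ?_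
  refine eVariationOn.comp_le_of_monotoneOn f φ (fun s _ t _ hst => ?_) hφ
  have : (s : ℝ) ≤ t := hst
  simp only [φ]
  nlinarith

lemma eVariationOn_lineMap_sub_le (p q : Plane) (a : ℝ) :
    eVariationOn (fun t => AffineMap.lineMap p q (t - a)) (Icc a (a + 1)) ≤ edist p q := by
  have hlip : LipschitzWith (nndist p q) fun t : ℝ => AffineMap.lineMap p q (t - a) :=
    LipschitzWith.of_dist_le_mul fun s t => by simp [mul_comm]
  have h := hlip.lipschitzOnWith.comp_eVariationOn_le (g := id) (mapsTo_id (Icc a (a + 1)))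
  rw [Function.comp_id, eVariationOn_id_Icc, add_sub_cancel_left, ENNReal.ofReal_one,
    mul_one] at h
  exact h.trans_eq (edist_nndist p q).symm

lemma geodesic_le_edist_add_edist (hpq : segment ℝ p q ⊆ S) (hqr : segment ℝ q r ⊆ S) :
    geodesic S p r ≤ edist p q + edist q r := by
  set f : ℝ → Plane := fun t =>
    if t ≤ 1 then AffineMap.lineMap p q t else AffineMap.lineMap q r (t - 1)
  have hf : Continuous f :=
    Continuous.if_le (by fun_prop) (by fun_prop) continuous_id continuous_const
      fun t ht => by simp [ht]
  have hS : MapsTo f (Icc 0 2) S := by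
    intro t ⟨ht0, ht2⟩
    by_cases ht : t ≤ 1
    · simpa [f, ht] using hpq (lineMap_mem_segment ℝ p q ⟨ht0, ht⟩)
    · simpa [f, ht] using hqr (lineMap_mem_segment ℝ q r ⟨by linarith, by linarith⟩)
  refine (geodesic_le_eVariationOn (by norm_num) hf.continuousOn (by simp [f])
    (by norm_num [f]) hS).trans ?_
  have hsplit := eVariationOn.Icc_add_Icc f (s := univ) (zero_le_one : (0 : ℝ) ≤ 1)
    (by norm_num : (1 : ℝ) ≤ 2) (mem_univ 1)
  simp only [univ_inter] at hsplit
  rw [← hsplit]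
  gcongr
  · rw [eVariationOn.congr (fun t ht => if_pos ht.2 : EqOn f _ (Icc 0 1))]
    simpa using eVariationOn_lineMap_sub_le p q 0
  · rw [eVariationOn.congr (f := f) (g := fun t => AffineMap.lineMap q r (t - 1))
      (s := Icc 1 2) fun t ht => ?_]
    · simpa [one_add_one_eq_two] using eVariationOn_lineMap_sub_le q r 1
    · rcases eq_or_lt_of_le ht.1 with rfl | h1
      · simp [f]
      · simp [f, not_le.2 h1]

lemma ofReal_le_geodesic {c : ℝ} (h : c ≤ dist p q) : ENNReal.ofReal c ≤ geodesic S p q :=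
  ((ENNReal.ofReal_le_ofReal h).trans_eq (edist_dist p q).symm).trans edist_le_geodesic

lemma dispersion_le_geodesic {G : Finset Plane} (hp : p ∈ G) (hq : q ∈ G) (hpq : p ≠ q) :
    dispersion S G ≤ geodesic S p q :=
  iInf₂_le_of_le p hp (iInf₂_le_of_le q hq (iInf_le _ hpq))

lemma le_dispersion {G : Finset Plane} {ℓ : ℝ≥0∞}
    (h : ∀ g ∈ G, ∀ g' ∈ G, g ≠ g' → ℓ ≤ geodesic S g g') : ℓ ≤ dispersion S G :=
  le_iInf₂ fun g hg => le_iInf₂ fun g' hg' => le_iInf fun hne => h g hg g' hg' hne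

end Geodesic

section Vertex

variable {S : Set Plane} {v : Plane}

lemma IsVertex.mem (hS : IsClosed S) (hv : IsVertex S v) : v ∈ S :=
  hS.frontier_subset hv.1

lemma not_isVertex_of_eventually {a b c : ℝ} (hab : a ≠ 0 ∨ b ≠ 0)
    (h : ∀ᶠ q in 𝓝 v, q ∈ frontier S → a * px q + b * py q = c) : ¬ IsVertex S v := by
  rintro ⟨-, hv⟩
  obtain ⟨ε, hε, hball⟩ := Metric.eventually_nhds_iff_ball.1 h
  exact hv ε hε ⟨a, b, c, hab, fun q hq => hball q hq.2 hq.1⟩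

lemma tendsto_ray (v : Plane) (s t : ℝ) :
    Tendsto (fun u => pt (px v + u * s) (py v + u * t)) (𝓝[>] 0) (𝓝 v) := by
  have hc : Continuous fun u : ℝ => pt (px v + u * s) (py v + u * t) :=
    continuous_pt (by fun_prop) (by fun_prop)
  simpa using (hc.tendsto 0).mono_left nhdsWithin_le_nhds

lemma mem_frontier_of_ray (hv : v ∈ S) (s t : ℝ)
    (h : ∀ᶠ u in 𝓝[>] 0, pt (px v + u * s) (py v + u * t) ∉ S) : v ∈ frontier S := by
  rw [frontier_eq_closure_inter_closure]
  exact ⟨subset_closure hv, mem_closure_of_tendsto (tendsto_ray v s t) h⟩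

lemma isVertex_of_frontier_rays {s t : ℝ} (hs : s ≠ 0) (ht : t ≠ 0)
    (hx : ∀ᶠ u in 𝓝[>] 0, pt (px v + u * s) (py v) ∈ frontier S)
    (hy : ∀ᶠ u in 𝓝[>] 0, pt (px v) (py v + u * t) ∈ frontier S) : IsVertex S v := by
  have hv : v ∈ frontier S :=
    isClosed_frontier.mem_of_tendsto (by simpa using tendsto_ray v s 0) hx
  refine ⟨hv, fun ε hε ⟨a, b, c, hab, hline⟩ => ?_⟩
  have hball (s t : ℝ) : ∀ᶠ u in 𝓝[>] 0, pt (px v + u * s) (py v + u * t) ∈ Metric.ball v ε :=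
    (tendsto_ray v s t).eventually (Metric.ball_mem_nhds v hε)
  obtain ⟨u, hu, ⟨hxf, hxb⟩, hyf, hyb⟩ :=
    ((eventually_mem_nhdsWithin (a := (0:ℝ)) (s := Ioi 0)).and
      ((hx.and (hball s 0)).and (hy.and (hball 0 t)))).exists
  simp only [mul_zero, add_zero] at hxb hyb
  have e0 := hline v ⟨hv, Metric.mem_ball_self hε⟩
  have e1 := hline _ ⟨hxf, hxb⟩
  have e2 := hline _ ⟨hyf, hyb⟩
  simp only [px_pt, py_pt] at e1 e2
  have ha : a * (u * s) = 0 := by linear_combination e1 - e0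
  have hb : b * (u * t) = 0 := by linear_combination e2 - e0
  have hu : u ≠ 0 := ne_of_gt hu
  have ha : a = 0 := by simpa [hu, hs] using ha
  have hb : b = 0 := by simpa [hu, ht] using hb
  exact hab.elim (· ha) (· hb)

end Vertex

@[simps]
def strip (a b t : ℝ) : Rect := ⟨a, b, 0, t⟩

def unitRegion (N : ℕ) (h : ℕ → ℝ) : Set Plane :=
  ⋃ k ∈ Finset.range N, (strip k (k + 1) (h k)).toSet

section UnitRegion

variable {N : ℕ} {h : ℕ → ℝ} {p q v : Plane}

@[simp] lemma mem_strip {a b t : ℝ} :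
    p ∈ (strip a b t).toSet ↔ a ≤ px p ∧ px p ≤ b ∧ 0 ≤ py p ∧ py p ≤ t := Iff.rfl

lemma mem_unitRegion :
    p ∈ unitRegion N h ↔
      ∃ k < N, (k : ℝ) ≤ px p ∧ px p ≤ k + 1 ∧ 0 ≤ py p ∧ py p ≤ h k := by
  simp only [unitRegion, mem_iUnion₂, Finset.mem_range, exists_prop, mem_strip]

lemma isClosed_unitRegion : IsClosed (unitRegion N h) :=
  isClosed_biUnion_finset fun _ _ => Rect.isClosed_toSet _

lemma bounds_of_mem_unitRegion (hp : p ∈ unitRegion N h) :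
    0 ≤ px p ∧ px p ≤ N ∧ 0 ≤ py p := by
  obtain ⟨k, hk, h1, h2, h3, -⟩ := mem_unitRegion.1 hp
  have : (k : ℝ) + 1 ≤ N := by exact_mod_cast hk
  exact ⟨le_trans k.cast_nonneg h1, by linarith, h3⟩

lemma mem_unitRegion_iff_of_mem_Ioo {k : ℕ} (hx : px p ∈ Ioo (k : ℝ) (k + 1)) :
    p ∈ unitRegion N h ↔ k < N ∧ 0 ≤ py p ∧ py p ≤ h k := by
  refine ⟨fun hp => ?_, fun ⟨hk, hy⟩ => mem_unitRegion.2 ⟨k, hk, hx.1.le, hx.2.le, hy⟩⟩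
  obtain ⟨c, hc, h1, h2, hy⟩ := mem_unitRegion.1 hp
  obtain rfl : c = k := by
    have : (c : ℝ) < k + 1 := h1.trans_lt hx.2
    have : (k : ℝ) < c + 1 := hx.1.trans_le h2
    norm_cast at *
    omega
  exact ⟨hc, hy⟩

lemma strip_subset_unitRegion {a b : ℕ} (hab : a ≤ b) (hb : b < N) {t : ℝ}
    (ht : ∀ k, a ≤ k → k ≤ b → t ≤ h k) : (strip a (b + 1) t).toSet ⊆ unitRegion N h := by
  rintro p ⟨h1, h2, h3, h4⟩
  have hcol (k : ℕ) (hak : a ≤ k) (hkb : k ≤ b) (hk1 : (k : ℝ) ≤ px p) (hk2 : px p ≤ k + 1) :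
      p ∈ unitRegion N h :=
    mem_unitRegion.2 ⟨k, hkb.trans_lt hb, hk1, hk2, h3, h4.trans (ht k hak hkb)⟩
  set n := ⌊px p⌋₊
  have hn1 : (n : ℝ) ≤ px p := Nat.floor_le ((Nat.cast_nonneg a).trans h1)
  have hn2 : px p < n + 1 := Nat.lt_floor_add_one (px p)
  rcases lt_or_ge n a with hna | han
  · refine hcol a le_rfl hab h1 ?_
    have : (n : ℝ) + 1 ≤ a := by exact_mod_cast hna
    linarith
  rcases le_or_gt n b with hnb | hbn
  · exact hcol n han hnb hn1 hn2.le
  · refine hcol b hab le_rfl ?_ h2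
    have : (b : ℝ) ≤ n := by exact_mod_cast hbn.le
    linarith

lemma strip_interiorSet_subset_interior {a b : ℕ} (hab : a ≤ b) (hb : b < N) {t : ℝ}
    (ht : ∀ k, a ≤ k → k ≤ b → t ≤ h k) :
    (strip a (b + 1) t).interiorSet ⊆ interior (unitRegion N h) :=
  interior_maximal ((Rect.interiorSet_subset_toSet _).trans (strip_subset_unitRegion hab hb ht))
    (Rect.isOpen_interiorSet _)

lemma notMem_unitRegion_of_height_lt {k : ℕ} (hx : px p ∈ Ioo (k : ℝ) (k + 1))
    (hy : h k < py p) : p ∉ unitRegion N h := fun hp =>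
  (mem_unitRegion_iff_of_mem_Ioo hx).1 hp |>.2.2.not_gt hy

lemma py_eq_of_mem_frontier {k : ℕ} (hq : q ∈ frontier (unitRegion N h))
    (hx : px q ∈ Ioo (k : ℝ) (k + 1)) : k < N ∧ (py q = 0 ∨ py q = h k) := by
  obtain ⟨hk, h0, h1⟩ :=
    (mem_unitRegion_iff_of_mem_Ioo hx).1 (isClosed_unitRegion.frontier_subset hq)
  refine ⟨hk, or_iff_not_and_not.2 fun ⟨hne0, hne1⟩ => hq.2 ?_⟩
  exact strip_interiorSet_subset_interior le_rfl hk (fun c h1 h2 => le_antisymm h2 h1 ▸ le_rfl)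
    ⟨hx.1, hx.2, lt_of_le_of_ne h0 (Ne.symm hne0), lt_of_le_of_ne h1 hne1⟩

lemma IsVertex.exists_px_eq_natCast (hpos : ∀ k < N, 0 < h k)
    (hv : IsVertex (unitRegion N h) v) : ∃ k : ℕ, px v = k := by
  have h0 := (bounds_of_mem_unitRegion (hv.mem isClosed_unitRegion)).1
  refine ⟨⌊px v⌋₊, (Nat.floor_le h0).antisymm' (not_lt.1 fun hlt => ?_)⟩
  have hx : px v ∈ Ioo (⌊px v⌋₊ : ℝ) (⌊px v⌋₊ + 1) := ⟨hlt, Nat.lt_floor_add_one _⟩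
  obtain ⟨hk, hy⟩ := py_eq_of_mem_frontier hv.1 hx
  have hk0 := hpos _ hk
  refine not_isVertex_of_eventually (a := 0) (b := 1) (c := py v) (Or.inr one_ne_zero) ?_ hv
  filter_upwards [continuous_px.continuousAt.eventually_mem (isOpen_Ioo.mem_nhds hx),
    continuous_py.continuousAt.eventually_mem (Metric.ball_mem_nhds (py v) hk0)]
    with q hqx hqy hqf
  rw [Metric.mem_ball, Real.dist_eq, abs_lt] at hqy
  rcases hy with hy | hy <;> rcases (py_eq_of_mem_frontier hqf hqx).2 with hq | hq <;>
    simp only [hy, hq] at hqy ⊢ <;> linarith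

lemma IsVertex.py_eq (hv : IsVertex (unitRegion N h) v) {k : ℕ} (hk : px v = k) :
    py v = 0 ∨ py v = h (k - 1) ∨ (k < N ∧ py v = h k) := by
  by_contra! hne
  obtain ⟨h0, hl, hr⟩ := hne
  refine not_isVertex_of_eventually (a := 1) (b := 0) (c := k) (Or.inl one_ne_zero) ?_ hv
  have hr' : ∀ᶠ q in 𝓝 v, k < N → py q ≠ h k := by
    by_cases hkN : k < N
    · exact (continuous_py.continuousAt.eventually_ne (hr hkN)).mono fun _ hq _ => hq
    · exact Eventually.of_forall fun _ h => absurd h hkN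
  have hx : px v ∈ Ioo ((k : ℝ) - 1) (k + 1) := by rw [hk]; constructor <;> linarith
  filter_upwards [continuous_px.continuousAt.eventually_mem (isOpen_Ioo.mem_nhds hx),
    continuous_py.continuousAt.eventually_ne h0, continuous_py.continuousAt.eventually_ne hl, hr']
    with q hqx hq0 hql hqr hqf
  simp only [one_mul, zero_mul, add_zero]
  rcases lt_trichotomy (px q) k with hlt | heq | hgt
  · obtain ⟨j, rfl⟩ : ∃ j, k = j + 1 := by
      refine Nat.exists_eq_succ_of_ne_zero fun hk0 => ?_
      have := (bounds_of_mem_unitRegion (isClosed_unitRegion.frontier_subset hqf)).1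
      simp only [hk0, CharP.cast_eq_zero] at hlt
      linarith
    push_cast at hqx hlt
    rcases (py_eq_of_mem_frontier (k := j) hqf ⟨by linarith [hqx.1], hlt⟩).2 with hq | hq
    · exact absurd hq hq0
    · exact absurd hq (by simpa using hql)
  · exact heq
  · rcases py_eq_of_mem_frontier hqf ⟨hgt, hqx.2⟩ with ⟨hkN, hq | hq⟩
    · exact absurd hq hq0
    · exact absurd hq (hqr hkN)

lemma IsVertex.eq_zero_or_le_of_py_eq_zero (hpos : ∀ k < N, 0 < h k)
    (hv : IsVertex (unitRegion N h) v) {k : ℕ} (hk : px v = k) (hy : py v = 0) :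
    k = 0 ∨ N ≤ k := by
  by_contra! hne
  obtain ⟨hk0, hkN⟩ := hne
  obtain ⟨j, rfl⟩ := Nat.exists_eq_succ_of_ne_zero hk0
  have ht : 0 < min (h j) (h (j + 1)) := lt_min (hpos j (by omega)) (hpos _ hkN)
  refine not_isVertex_of_eventually (a := 0) (b := 1) (c := 0) (Or.inr one_ne_zero) ?_ hv
  have hx : px v ∈ Ioo (j : ℝ) (j + 1 + 1) := by rw [hk]; push_cast; constructor <;> linarith
  filter_upwards [continuous_px.continuousAt.eventually_mem (isOpen_Ioo.mem_nhds hx),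
    continuous_py.continuousAt.eventually_mem (Iio_mem_nhds (hy ▸ ht))] with q hqx hqy hqf
  simp only [zero_mul, one_mul, zero_add]
  have hq0 := (bounds_of_mem_unitRegion (isClosed_unitRegion.frontier_subset hqf)).2.2
  by_contra hne
  refine hqf.2 (strip_interiorSet_subset_interior (a := j) (b := j + 1) (by omega) hkN
    (fun c h1 h2 => ?_) ⟨hqx.1, by exact_mod_cast hqx.2, lt_of_le_of_ne hq0 (Ne.symm hne), hqy⟩)
  rcases (by omega : c = j ∨ c = j + 1) with rfl | rfl
  exacts [min_le_left _ _, min_le_right _ _]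

lemma mem_frontier_of_py_eq_zero (hp : p ∈ unitRegion N h) (hy : py p = 0) :
    p ∈ frontier (unitRegion N h) :=
  mem_frontier_of_ray hp 0 (-1) <| eventually_mem_nhdsWithin.mono fun u (hu : 0 < u) hmem => by
    have := (bounds_of_mem_unitRegion hmem).2.2
    simp only [py_pt, hy] at this
    linarith

lemma mem_frontier_of_px_eq_zero (hp : p ∈ unitRegion N h) (hx : px p = 0) :
    p ∈ frontier (unitRegion N h) :=
  mem_frontier_of_ray hp (-1) 0 <| eventually_mem_nhdsWithin.mono fun u (hu : 0 < u) hmem => by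
    have := (bounds_of_mem_unitRegion hmem).1
    simp only [px_pt, hx] at this
    linarith

lemma mem_frontier_of_py_eq_height (hp : p ∈ unitRegion N h) {k : ℕ}
    (hx : px p ∈ Ioo (k : ℝ) (k + 1)) (hy : py p = h k) : p ∈ frontier (unitRegion N h) :=
  mem_frontier_of_ray hp 0 1 <| eventually_mem_nhdsWithin.mono fun u (hu : 0 < u) =>
    notMem_unitRegion_of_height_lt (by simpa using hx) (by simp only [py_pt, hy]; linarith)

lemma mem_frontier_of_height_lt_left (hp : p ∈ unitRegion N h) {j : ℕ} (hx : px p = j + 1)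
    (hy : h j < py p) : p ∈ frontier (unitRegion N h) :=
  mem_frontier_of_ray hp (-1) 0 <| Filter.mem_of_superset (Ioo_mem_nhdsGT one_pos) fun u hu =>
    notMem_unitRegion_of_height_lt (k := j)
      ⟨by simp only [px_pt, hx]; linarith [hu.2], by simp only [px_pt, hx]; linarith [hu.1]⟩
      (by simpa using hy)

lemma mem_frontier_of_height_lt_right (hp : p ∈ unitRegion N h) {k : ℕ} (hx : px p = k)
    (hy : h k < py p) : p ∈ frontier (unitRegion N h) :=
  mem_frontier_of_ray hp 1 0 <| Filter.mem_of_superset (Ioo_mem_nhdsGT one_pos) fun u hu =>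
    notMem_unitRegion_of_height_lt (k := k)
      ⟨by simp only [px_pt, hx]; linarith [hu.1], by simp only [px_pt, hx]; linarith [hu.2]⟩
      (by simpa using hy)

lemma isVertex_origin (hN : 0 < N) (h0 : 0 < h 0) : IsVertex (unitRegion N h) (pt 0 0) := by
  refine isVertex_of_frontier_rays (s := 1) (t := 1) one_ne_zero one_ne_zero ?_ ?_
  · filter_upwards [Ioo_mem_nhdsGT one_pos] with u hu
    refine mem_frontier_of_py_eq_zero (mem_unitRegion.2 ⟨0, hN, ?_⟩) (by simp)
    simp only [px_pt, py_pt, CharP.cast_eq_zero]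
    refine ⟨?_, ?_, ?_, ?_⟩ <;> linarith [hu.1, hu.2]
  · filter_upwards [Ioo_mem_nhdsGT h0] with u hu
    refine mem_frontier_of_px_eq_zero (mem_unitRegion.2 ⟨0, hN, ?_⟩) (by simp)
    simp only [px_pt, py_pt, CharP.cast_eq_zero]
    refine ⟨?_, ?_, ?_, ?_⟩ <;> linarith [hu.1, hu.2]

lemma isVertex_of_height_lt_succ {j : ℕ} (hj : j + 1 < N) (h0 : 0 ≤ h j)
    (hlt : h j < h (j + 1)) : IsVertex (unitRegion N h) (pt (j + 1) (h j)) := by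
  refine isVertex_of_frontier_rays (s := -1) (t := 1) (by norm_num) one_ne_zero ?_ ?_
  · filter_upwards [Ioo_mem_nhdsGT one_pos] with u hu
    simp only [px_pt, py_pt]
    have hx : (j : ℝ) + 1 + u * -1 ∈ Ioo (j : ℝ) (j + 1) := by
      constructor <;> linarith [hu.1, hu.2]
    refine mem_frontier_of_py_eq_height (k := j) ?_ (by simpa using hx) rfl
    exact mem_unitRegion.2 ⟨j, by omega, by simpa using hx.1.le, by simpa using hx.2.le, h0, le_rfl⟩
  · filter_upwards [Ioo_mem_nhdsGT (sub_pos.2 hlt)] with u hu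
    refine mem_frontier_of_height_lt_left (j := j) (mem_unitRegion.2 ⟨j + 1, hj, ?_⟩)
      (by simp) (by simp only [py_pt]; linarith [hu.1])
    simp only [px_pt, py_pt]
    push_cast
    refine ⟨le_rfl, by linarith, by linarith [hu.1], by linarith [hu.2]⟩

lemma isVertex_of_height_succ_lt {j : ℕ} (hj : j + 1 < N) (h0 : 0 ≤ h (j + 1))
    (hlt : h (j + 1) < h j) : IsVertex (unitRegion N h) (pt (j + 1) (h (j + 1))) := by
  refine isVertex_of_frontier_rays (s := 1) (t := 1) one_ne_zero one_ne_zero ?_ ?_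
  · filter_upwards [Ioo_mem_nhdsGT one_pos] with u hu
    simp only [px_pt, py_pt]
    have hx : (j : ℝ) + 1 + u * 1 ∈ Ioo ((j + 1 : ℕ) : ℝ) ((j + 1 : ℕ) + 1) := by
      push_cast; constructor <;> linarith [hu.1, hu.2]
    refine mem_frontier_of_py_eq_height ?_ (by simpa using hx) rfl
    exact mem_unitRegion.2 ⟨j + 1, hj, by simpa using hx.1.le, by simpa using hx.2.le, h0, le_rfl⟩
  · filter_upwards [Ioo_mem_nhdsGT (sub_pos.2 hlt)] with u hu
    refine mem_frontier_of_height_lt_right (k := j + 1) (mem_unitRegion.2 ⟨j, by omega, ?_⟩)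
      (by simp) (by simp only [py_pt]; linarith [hu.1])
    simp only [px_pt, py_pt]
    refine ⟨by linarith, le_rfl, by linarith [hu.1], by linarith [hu.2]⟩

lemma rSee_of_mem_strip {a b : ℕ} (hab : a ≤ b) (hb : b < N) {t : ℝ}
    (ht : ∀ k, a ≤ k → k ≤ b → t ≤ h k) {g p : Plane} (hg : g ∈ (strip a (b + 1) t).toSet)
    (hp : p ∈ (strip a (b + 1) t).toSet) : RSee (unitRegion N h) g p :=
  rSee_of_mem_rect (strip_subset_unitRegion hab hb ht) hg hp

lemma RSee.le_height {g p : Plane} (hsee : RSee (unitRegion N h) g p) {k : ℕ} {x : ℝ}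
    (hx : x ∈ Ioo (k : ℝ) (k + 1)) (hgx : min (px g) (px p) ≤ x) (hxp : x ≤ max (px g) (px p)) :
    max (py g) (py p) ≤ h k :=
  ((mem_unitRegion_iff_of_mem_Ioo (p := pt x (max (py g) (py p))) hx).1
    (hsee ⟨hgx, hxp, min_le_max, le_rfl⟩)).2.2

end UnitRegion

def Histogram.ofUnit (N : ℕ) (hN : 0 < N) (h : ℕ → ℝ) (hpos : ∀ k < N, 0 < h k)
    (hadj : ∀ k, k + 1 < N → h k ≠ h (k + 1)) : Histogram where
  n := N
  npos := hN
  xs i := (i : ℕ)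
  mono _ _ hij := Nat.cast_lt.2 hij
  h i := h i
  hpos i := hpos i i.2
  adj_ne i j hij := hij ▸ hadj i (hij ▸ j.2)

lemma Histogram.region_ofUnit {N : ℕ} (hN : 0 < N) {h : ℕ → ℝ} (hpos : ∀ k < N, 0 < h k)
    (hadj : ∀ k, k + 1 < N → h k ≠ h (k + 1)) :
    (Histogram.ofUnit N hN h hpos hadj).region = unitRegion N h := by
  ext p
  simp only [Histogram.region, Histogram.ofUnit, mem_iUnion, mem_ofPred_eq, mem_unitRegion,
    Fin.val_castSucc, Fin.val_succ, Nat.cast_add, Nat.cast_one]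
  exact ⟨fun ⟨i, hi⟩ => ⟨i, i.2, hi⟩, fun ⟨k, hk, hp⟩ => ⟨⟨k, hk⟩, hp⟩⟩

lemma le_two_mul_card_of_mem_Icc {α : Type*} {M : ℕ} {G : Finset α} (x : α → ℝ) (c : ℕ → α)
    (hc : ∀ j < M, c j ∈ G ∧ x (c j) ∈ Icc (j : ℝ) (j + 1)) : M ≤ 2 * G.card := by
  classical
  have hfiber (b : α) : {j ∈ Finset.range M | c j = b} ⊆ Finset.Icc (⌊x b⌋₊ - 1) ⌊x b⌋₊ := by
    intro j hj
    obtain ⟨hjM, rfl⟩ := Finset.mem_filter.1 hj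
    obtain ⟨-, h1, h2⟩ := hc j (Finset.mem_range.1 hjM)
    have h1' : j ≤ ⌊x (c j)⌋₊ := Nat.le_floor h1
    have h2' : ⌊x (c j)⌋₊ ≤ j + 1 := Nat.floor_le_of_le (by exact_mod_cast h2)
    exact Finset.mem_Icc.2 ⟨by omega, h1'⟩
  simpa using Finset.card_le_mul_card_image_of_maps_to
    (fun j hj => (hc j (Finset.mem_range.1 hj)).1) 2
    fun b _ => (Finset.card_le_card (hfiber b)).trans (by simp; omega)

/-- A spike of height `2`, a notch of height `1`, then a staircase descending from `M + 1`
to `2`. -/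
def height (M k : ℕ) : ℝ := if k = 0 then 2 else if k = 1 then 1 else M + 3 - k

abbrev staircase (M : ℕ) : Set Plane := unitRegion (M + 2) (height M)

section Staircase

variable {M : ℕ}

@[simp] lemma height_zero : height M 0 = 2 := rfl

@[simp] lemma height_one : height M 1 = 1 := rfl

@[simp] lemma height_add_two (j : ℕ) : height M (j + 2) = M + 1 - j := by
  simp only [height, Nat.add_eq_zero_iff, OfNat.ofNat_ne_zero, and_false, if_false]
  push_cast
  ring

lemma height_pos {k : ℕ} (hk : k < M + 2) : 0 < height M k := by
  match k with
  | 0 => norm_num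
  | 1 => norm_num
  | j + 2 =>
    rw [height_add_two]
    have : (j : ℝ) < M := by exact_mod_cast (by omega : j < M)
    linarith

lemma height_ne_succ {k : ℕ} (hk : k + 1 < M + 2) : height M k ≠ height M (k + 1) := by
  match k with
  | 0 => norm_num
  | 1 =>
    rw [height_one, height_add_two, Nat.cast_zero, sub_zero]
    have : (0 : ℝ) < M := by exact_mod_cast (by omega : 0 < M)
    intro h; linarith
  | j + 2 =>
    rw [height_add_two, show j + 2 + 1 = (j + 1) + 2 from rfl, height_add_two]
    push_cast
    intro h; linarith

def staircaseHistogram (M : ℕ) : Histogram :=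
  Histogram.ofUnit (M + 2) (by omega) (height M) (fun _ => height_pos) (fun _ => height_ne_succ)

lemma region_staircaseHistogram : (staircaseHistogram M).region = staircase M :=
  Histogram.region_ofUnit _ _ _

lemma spike_subset_staircase : (strip 0 1 2).toSet ⊆ staircase M := by
  simpa using strip_subset_unitRegion (N := M + 2) (h := height M) (a := 0) (b := 0) le_rfl
    (by omega) (t := 2) (fun k _ h => by rw [Nat.le_zero.1 h, height_zero])

lemma notch_subset_staircase : (strip 1 2 1).toSet ⊆ staircase M := by
  simpa [one_add_one_eq_two] using strip_subset_unitRegion (N := M + 2) (h := height M)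
    (a := 1) (b := 1) le_rfl (by omega) (t := 1)
    (fun k h1 h2 => by rw [le_antisymm h2 h1, height_one])

def notchCorner : Plane := pt 2 1

def stepCorner (M j : ℕ) : Plane := pt (j + 2) (M + 1 - j)

def stepTop (M j : ℕ) : Plane := pt (j + 5 / 2) (M + 1 - j)

def spikeTop : Plane := pt (1 / 2) 2

lemma staircase_cases {p : Plane} (hp : p ∈ staircase M) :
    p ∈ (strip 0 1 2).toSet ∨ p ∈ (strip 1 2 1).toSet ∨
      ∃ j < M, p ∈ (strip (j + 2) (j + 3) (M + 1 - j)).toSet := by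
  obtain ⟨k, hk, h1, h2, h3, h4⟩ := mem_unitRegion.1 hp
  match k, hk with
  | 0, _ => exact Or.inl (by simp_all)
  | 1, _ => exact Or.inr (Or.inl (by norm_num at *; exact ⟨h1, by linarith, h3, h4⟩))
  | j + 2, hk =>
    refine Or.inr (Or.inr ⟨j, by omega, ?_⟩)
    simp only [mem_strip]
    push_cast at h1 h2
    exact ⟨h1, by linarith, h3, by simpa using h4⟩

lemma rSee_of_mem_column {j : ℕ} (hj : j < M) {g p : Plane}
    (hg : g ∈ (strip (j + 2) (j + 3) (M + 1 - j)).toSet)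
    (hp : p ∈ (strip (j + 2) (j + 3) (M + 1 - j)).toSet) : RSee (staircase M) g p := by
  have e : strip ((j + 2 : ℕ) : ℝ) ((j + 2 : ℕ) + 1) (M + 1 - j) =
      strip (j + 2) (j + 3) (M + 1 - j) := by
    push_cast; ring_nf
  refine rSee_of_mem_strip (a := j + 2) (b := j + 2) le_rfl (by omega) (fun k h1 h2 => ?_)
    (e ▸ hg) (e ▸ hp)
  rw [le_antisymm h2 h1, height_add_two]

lemma rSee_origin {p : Plane} (hp : p ∈ (strip 0 1 2).toSet ∨ p ∈ (strip 1 2 1).toSet) :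
    RSee (staircase M) (pt 0 0) p := by
  rcases hp with hp | hp
  · exact rSee_of_mem_rect spike_subset_staircase (by norm_num) hp
  · refine rSee_of_mem_strip (a := 0) (b := 1) zero_le_one (by omega) (t := 1)
      (fun k _ h => ?_) (by norm_num) (by norm_num at hp ⊢; exact ⟨by linarith, hp.2⟩)
    rcases (by omega : k = 0 ∨ k = 1) with rfl | rfl <;> norm_num

lemma rSee_notchCorner {p : Plane}
    (hp : p ∈ (strip 1 2 1).toSet ∨ ∃ j < M, p ∈ (strip (j + 2) (j + 3) (M + 1 - j)).toSet) :
    RSee (staircase M) notchCorner p := by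
  rcases hp with hp | ⟨j, hj, hp⟩
  · exact rSee_of_mem_rect notch_subset_staircase (by norm_num [notchCorner]) hp
  · have hjM : (j : ℝ) < M := by exact_mod_cast hj
    refine rSee_of_mem_strip (a := 2) (b := j + 2) (by omega) (by omega) (t := M + 1 - j)
      (fun k h1 h2 => ?_) ?_ ?_
    · obtain ⟨i, rfl⟩ := Nat.exists_eq_add_of_le' h1
      rw [height_add_two]
      have : (i : ℝ) ≤ j := by exact_mod_cast (by omega : i ≤ j)
      linarith
    · simp only [notchCorner, mem_strip, px_pt, py_pt]; push_cast
      refine ⟨le_rfl, ?_, ?_, ?_⟩ <;> linarith [j.cast_nonneg (α := ℝ)]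
    · simp only [mem_strip] at hp ⊢; push_cast
      refine ⟨?_, ?_, hp.2.2⟩ <;> linarith [hp.1, hp.2.1, j.cast_nonneg (α := ℝ)]

lemma spikeTop_mem : spikeTop ∈ staircase M :=
  mem_unitRegion.2 ⟨0, by omega, by norm_num [spikeTop]⟩

lemma stepTop_mem {j : ℕ} (hj : j < M) : stepTop M j ∈ staircase M := by
  have : (j : ℝ) + 1 ≤ M := by exact_mod_cast hj
  refine mem_unitRegion.2 ⟨j + 2, by omega, ?_⟩
  simp only [stepTop, px_pt, py_pt, height_add_two]
  push_cast
  refine ⟨?_, ?_, ?_, le_rfl⟩ <;> linarith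

lemma mem_strip_of_rSee_spikeTop {g : Plane} (hsee : RSee (staircase M) g spikeTop) :
    g ∈ (strip 0 1 2).toSet := by
  have hx : px g ≤ 1 := by
    by_contra! hg
    have h := hsee.le_height (k := 1) (x := min (px g) (3 / 2))
      ⟨by push_cast; exact lt_min hg (by norm_num),
        by push_cast; exact min_lt_of_right_lt (by norm_num)⟩
      (min_le_min le_rfl (by norm_num [spikeTop])) ((min_le_left _ _).trans (le_max_left _ _))
    norm_num [spikeTop] at h
  rcases staircase_cases hsee.mem_left with h | h | ⟨j, -, h⟩
  · exact h
  · exact ⟨h.1.trans' (by norm_num), hx, h.2.2.1, h.2.2.2.trans (by norm_num)⟩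
  · linarith [(mem_strip.1 h).1, j.cast_nonneg (α := ℝ)]

lemma bounds_of_rSee_stepTop {j : ℕ} (hj : j < M) {g : Plane}
    (hsee : RSee (staircase M) g (stepTop M j)) :
    2 ≤ px g ∧ px g ≤ j + 3 ∧ py g ≤ M + 1 - j := by
  have hjM : (j : ℝ) + 1 ≤ M := by exact_mod_cast hj
  have hpx : px (stepTop M j) = j + 5 / 2 := rfl
  have hpy : py (stepTop M j) = M + 1 - j := rfl
  have hy := hsee.le_height (k := j + 2) (x := j + 5 / 2) ⟨by push_cast; linarith,
    by push_cast; linarith⟩ ((min_le_right _ _).trans hpx.le) (hpx.ge.trans (le_max_right _ _))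
  rw [height_add_two] at hy
  refine ⟨?_, ?_, (le_max_left _ _).trans hy⟩
  · by_contra! hg
    have hx : max (px g) (3 / 2) ∈ Ioo ((1 : ℕ) : ℝ) ((1 : ℕ) + 1) :=
      ⟨by norm_num, by norm_num [hg]⟩
    have h := hsee.le_height hx
      ((min_le_left _ _).trans (le_max_left _ _)) (max_le_max le_rfl (by rw [hpx]; linarith))
    rw [height_one, hpy] at h
    linarith [le_max_right (py g) (M + 1 - j)]
  · by_contra! hg
    rcases lt_or_ge (j + 1) M with hj1 | hj1
    · have h := hsee.le_height (k := (j + 1) + 2) (x := min (px g) (j + 7 / 2))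
        ⟨by push_cast; exact lt_min (by linarith) (by linarith),
          by push_cast; exact min_lt_of_right_lt (by linarith)⟩
        (min_le_min le_rfl (by rw [hpx]; linarith)) ((min_le_left _ _).trans (le_max_left _ _))
      rw [height_add_two, hpy] at h
      push_cast at h
      linarith [le_max_right (py g) (M + 1 - j)]
    · have := (bounds_of_mem_unitRegion hsee.mem_left).2.1
      have : (M : ℝ) ≤ j + 1 := by exact_mod_cast hj1
      push_cast at *
      linarith

lemma geodesic_notchCorner_le {g : Plane} (hg : g ∈ (strip 0 1 2).toSet) :
    geodesic (staircase M) notchCorner g ≤ ENNReal.ofReal 3 := by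
  have hq0 : pt 1 1 ∈ (strip 0 1 2).toSet := by norm_num
  have hq1 : pt 1 1 ∈ (strip 1 2 1).toSet := by norm_num
  have hn : notchCorner ∈ (strip 1 2 1).toSet := by norm_num [notchCorner]
  refine (geodesic_le_edist_add_edist (((Rect.convex_toSet _).segment_subset hn hq1).trans
    notch_subset_staircase) (((Rect.convex_toSet _).segment_subset hq0 hg).trans
    spike_subset_staircase)).trans ?_
  rw [edist_eq_ofReal, edist_eq_ofReal, ← ENNReal.ofReal_add (by positivity) (by positivity)]
  refine ENNReal.ofReal_le_ofReal ?_
  obtain ⟨h1, h2, h3, h4⟩ := mem_strip.1 hg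
  have : |1 - px g| ≤ 1 := abs_le.2 ⟨by linarith, by linarith⟩
  have : |1 - py g| ≤ 1 := abs_le.2 ⟨by linarith, by linarith⟩
  norm_num [notchCorner]
  linarith

lemma isVertex_notchCorner (hM : 0 < M) : IsVertex (staircase M) notchCorner := by
  have hM' : (0 : ℝ) < M := by exact_mod_cast hM
  have h := isVertex_of_height_lt_succ (N := M + 2) (h := height M) (j := 1) (by omega)
    (by norm_num) (by rw [height_one, show 1 + 1 = 0 + 2 from rfl, height_add_two]; simpa)
  simpa [notchCorner, one_add_one_eq_two] using h

lemma isVertex_stepCorner {j : ℕ} (hj1 : 1 ≤ j) (hj : j < M) :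
    IsVertex (staircase M) (stepCorner M j) := by
  obtain ⟨i, rfl⟩ := Nat.exists_eq_add_of_le' hj1
  have e : stepCorner M (i + 1) = pt ((i + 2 : ℕ) + 1) (height M (i + 2 + 1)) := by
    rw [show i + 2 + 1 = (i + 1) + 2 from rfl, height_add_two, stepCorner]
    push_cast
    ring_nf
  rw [e]
  refine isVertex_of_height_succ_lt (by omega) (height_pos (by omega)).le ?_
  rw [show i + 2 + 1 = (i + 1) + 2 from rfl, height_add_two, height_add_two]
  push_cast
  linarith

def minGuards : Finset Plane := {pt 0 0, notchCorner}

lemma card_minGuards : minGuards.card = 2 :=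
  Finset.card_pair fun h => by simpa [notchCorner] using congrArg px h

lemma isGuardSet_minGuards (hM : 0 < M) : IsGuardSet (staircase M) minGuards := by
  refine ⟨?_, fun p hp => ?_⟩
  · simpa [minGuards] using ⟨isVertex_origin (by omega) (by norm_num), isVertex_notchCorner hM⟩
  rcases staircase_cases hp with h | h
  · exact ⟨pt 0 0, by simp [minGuards], rSee_origin (Or.inl h)⟩
  · exact ⟨notchCorner, by simp [minGuards], rSee_notchCorner h⟩

lemma two_le_card_of_isGuardSet (hM : 0 < M) {G : Finset Plane}
    (hG : IsGuardSet (staircase M) G) : 2 ≤ G.card := by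
  obtain ⟨g, hg, hsee⟩ := hG.2 spikeTop spikeTop_mem
  obtain ⟨g', hg', hsee'⟩ := hG.2 (stepTop M 0) (stepTop_mem hM)
  have h1 := (mem_strip.1 (mem_strip_of_rSee_spikeTop hsee)).2.1
  have h2 := (bounds_of_rSee_stepTop hM hsee').1
  exact Finset.one_lt_card.2 ⟨g, hg, g', hg', fun h => by rw [h] at h1; linarith⟩

def dispersedGuards (M : ℕ) : Finset Plane :=
  insert (pt 0 0) ((Finset.range (M / 2)).image fun i => stepCorner M (2 * i + 1))

lemma isGuardSet_dispersedGuards (hM : Even M) :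
    IsGuardSet (staircase M) (dispersedGuards M) := by
  obtain ⟨r, rfl⟩ := hM
  refine ⟨fun g hg => ?_, fun p hp => ?_⟩
  · rcases Finset.mem_insert.1 hg with rfl | hg
    · exact isVertex_origin (by omega) (by norm_num)
    · obtain ⟨i, hi, rfl⟩ := Finset.mem_image.1 hg
      exact isVertex_stepCorner (by omega) (by rw [Finset.mem_range] at hi; omega)
  rcases staircase_cases hp with h | h | ⟨j, hj, h⟩
  · exact ⟨_, Finset.mem_insert_self _ _, rSee_origin (Or.inl h)⟩
  · exact ⟨_, Finset.mem_insert_self _ _, rSee_origin (Or.inr h)⟩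
  have hjr : (j : ℝ) + 1 ≤ r + r := by exact_mod_cast hj
  obtain ⟨i, hi, hmem⟩ : ∃ i < r, stepCorner (r + r) (2 * i + 1) ∈
      (strip (j + 2) (j + 3) ((r + r : ℕ) + 1 - j)).toSet := by
    rcases Nat.even_or_odd' j with ⟨i, rfl | rfl⟩
    · refine ⟨i, by omega, ?_⟩
      simp only [stepCorner, mem_strip, px_pt, py_pt]
      push_cast at hjr ⊢
      refine ⟨?_, ?_, ?_, ?_⟩ <;> linarith
    · refine ⟨i, by omega, ?_⟩
      simp only [stepCorner, mem_strip, px_pt, py_pt]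
      push_cast at hjr ⊢
      refine ⟨?_, ?_, ?_, ?_⟩ <;> linarith
  exact ⟨_, Finset.mem_insert_of_mem (Finset.mem_image_of_mem _ (Finset.mem_range.2
    (by omega))), rSee_of_mem_column hj hmem h⟩

lemma dist_origin_stepCorner {j : ℕ} (hj : j ≤ M + 1) : dist (pt 0 0) (stepCorner M j) = M + 3 := by
  have : (j : ℝ) ≤ M + 1 := by exact_mod_cast hj
  rw [dist_eq_abs_add_abs]
  simp only [stepCorner, px_pt, py_pt, zero_sub, abs_neg]
  rw [abs_of_nonneg (by positivity), abs_of_nonneg (by linarith)]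
  ring

lemma dist_stepCorner (a b : ℕ) : dist (stepCorner M a) (stepCorner M b) = 2 * |(a : ℝ) - b| := by
  rw [dist_eq_abs_add_abs]
  simp only [stepCorner, px_pt, py_pt]
  rw [show (M : ℝ) + 1 - a - (M + 1 - b) = -(a - b) by ring, abs_neg,
    show (a : ℝ) + 2 - (b + 2) = a - b by ring]
  ring

lemma four_le_dispersion_dispersedGuards (hM : 0 < M) :
    ENNReal.ofReal 4 ≤ dispersion (staircase M) (dispersedGuards M) := by
  have hM' : (1 : ℝ) ≤ M := by exact_mod_cast hM
  refine le_dispersion fun g hg g' hg' hne => ofReal_le_geodesic ?_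
  simp only [dispersedGuards, Finset.mem_insert, Finset.mem_image, Finset.mem_range] at hg hg'
  rcases hg with rfl | ⟨i, hi, rfl⟩ <;> rcases hg' with rfl | ⟨i', hi', rfl⟩
  · exact absurd rfl hne
  · rw [dist_origin_stepCorner (by omega)]; linarith
  · rw [dist_comm, dist_origin_stepCorner (by omega)]; linarith
  · have hii : (i : ℤ) - i' ≠ 0 := sub_ne_zero.2 fun h => hne (by rw [Nat.cast_inj.1 h])
    have h1 : (1 : ℝ) ≤ |(i : ℝ) - i'| := by exact_mod_cast Int.one_le_abs hii
    rw [dist_stepCorner]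
    push_cast
    rw [show (2 * i + 1 : ℝ) - (2 * i' + 1) = 2 * (i - i') by ring, abs_mul, abs_two]
    linarith

lemma notchCorner_notMem {G : Finset Plane} (hG : IsGuardSet (staircase M) G)
    (hd : ENNReal.ofReal 4 ≤ dispersion (staircase M) G) : notchCorner ∉ G := by
  intro hn
  obtain ⟨g, hg, hsee⟩ := hG.2 spikeTop spikeTop_mem
  have hgs := mem_strip_of_rSee_spikeTop hsee
  have hne : notchCorner ≠ g := by
    rintro rfl
    norm_num [notchCorner] at hgs
  have h := (hd.trans (dispersion_le_geodesic hn hg hne)).trans (geodesic_notchCorner_le hgs)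
  rw [ENNReal.ofReal_le_ofReal_iff (by norm_num)] at h
  norm_num at h

/-- The vertices with `x ≥ 2` other than the notch corner lie on or above the line
`x + y = M + 3`, or on the right edge. -/
lemma add_two_le_px_of_isVertex {g : Plane} (hv : IsVertex (staircase M) g)
    (hg : g ≠ notchCorner) {j : ℕ} (hj : j < M) (hx : 2 ≤ px g) (hy : py g ≤ M + 1 - j) :
    (j : ℝ) + 2 ≤ px g := by
  obtain ⟨k, hk⟩ := hv.exists_px_eq_natCast fun _ => height_pos
  obtain ⟨i, rfl⟩ : ∃ i, k = i + 2 := ⟨k - 2, by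
    have : ((2 : ℕ) : ℝ) ≤ k := by rw [← hk]; simpa using hx
    have := Nat.cast_le.1 this
    omega⟩
  have hk' : px g = i + 2 := by rw [hk]; push_cast; ring
  rw [hk']
  have hjM : (j : ℝ) < M := by exact_mod_cast hj
  rcases hv.py_eq hk with h0 | hl | ⟨-, hr⟩
  · rcases hv.eq_zero_or_le_of_py_eq_zero (fun _ => height_pos) hk h0 with h | h
    · omega
    · have : ((M + 2 : ℕ) : ℝ) ≤ ((i + 2 : ℕ) : ℝ) := by exact_mod_cast h
      push_cast at this
      linarith
  · rcases i with _ | i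
    · exact absurd (Plane.ext (by simp [hk', notchCorner]) (by simp [hl, notchCorner])) hg
    · rw [show i + 1 + 2 - 1 = i + 2 from rfl, height_add_two] at hl
      push_cast
      linarith
  · rw [height_add_two] at hr
    linarith

lemma le_two_mul_card_of_four_le_dispersion {G : Finset Plane}
    (hG : IsGuardSet (staircase M) G) (hd : ENNReal.ofReal 4 ≤ dispersion (staircase M) G) :
    M ≤ 2 * G.card := by
  have hn := notchCorner_notMem hG hd
  choose! c hcG hcsee using fun j (hj : j < M) => hG.2 (stepTop M j) (stepTop_mem hj)
  refine le_two_mul_card_of_mem_Icc (fun g => px g - 2) c fun j hj => ⟨hcG j hj, ?_, ?_⟩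
  · obtain ⟨h2, -, hy⟩ := bounds_of_rSee_stepTop hj (hcsee j hj)
    have := add_two_le_px_of_isVertex (hG.1 _ (hcG j hj)) (fun h => hn (h ▸ hcG j hj)) hj h2 hy
    linarith
  · linarith [(bounds_of_rSee_stepTop hj (hcsee j hj)).2.1]

end Staircase

/-- For every `m : ℕ` there exists a histogram polygon such that every
vertex guard set attaining the maximum possible dispersion distance has cardinality at
least `m` times the minimum cardinality of a vertex guard set; hence the ratio between
the size of a smallest maximally dispersed vertex guard set and the size of a smallest
vertex guard set is unbounded, even for histograms. -/
theorem histogram_dispersive_ratio_unbounded (m : ℕ) :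
    ∃ H : Histogram, ∃ Gmin : Finset Plane,
      IsGuardSet H.region Gmin ∧
      (∀ G' : Finset Plane, IsGuardSet H.region G' → Gmin.card ≤ G'.card) ∧
      ∀ G : Finset Plane, AttainsMaxDispersion H.region G → m * Gmin.card ≤ G.card := by
  set M := 4 * max m 1
  have hM : 0 < M := by omega
  have hEven : Even M := ⟨2 * max m 1, by omega⟩
  refine ⟨staircaseHistogram M, minGuards, ?_, ?_, ?_⟩ <;> rw [region_staircaseHistogram]
  · exact isGuardSet_minGuards hM
  · exact fun G hG => card_minGuards ▸ two_le_card_of_isGuardSet hM hG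
  · intro G hG
    have := le_two_mul_card_of_four_le_dispersion hG.1
      ((four_le_dispersion_dispersedGuards hM).trans (hG.2 _ (isGuardSet_dispersedGuards hEven)))
    rw [card_minGuards]
    omega

end DispersiveAGP
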